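/- Adams consensus commutes with restriction to its own clusters: if Y is a cluster of φ_Ad(P) for a profile P of rooted phylogenetic trees on X, then φ_Ad(P)|_Y = φ_Ad(P|_Y). Consequently Adams consensus satisfies extension stability for clusters (I). -/

import Mathlib

/-- A (candidate) rooted phylogenetic tree, encoded by its set of clusters. -/
abbrev PTree : Type := Finset (Finset ℕ)

/-- Two clusters are nested: disjoint or one contained in the other. -/
abbrev Nested (C D : Finset ℕ) : Prop := C ∩ D = ∅ ∨ C ⊆ D ∨ D ⊆ C

/-- `H` is a hierarchy on leaf set `X`: a rooted phylogenetic tree in `RP(X)`. -/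
structure IsHierarchy (X : Finset ℕ) (H : PTree) : Prop where
  subset_top : ∀ C ∈ H, C ⊆ X
  cluster_nonempty : ∀ C ∈ H, C.Nonempty
  top_mem : X ∈ H
  singleton_mem : ∀ x ∈ X, ({x} : Finset ℕ) ∈ H
  laminar : ∀ C ∈ H, ∀ D ∈ H, Nested C D

/-- Restriction `T|_Y` of a tree to a subset `Y` of the leaves. -/
def restrictT (H : PTree) (Y : Finset ℕ) : PTree :=
  (H.image (fun C => C ∩ Y)).filter (fun C => C.Nonempty)

/-- The maximal proper clusters of a tree on leaf set `X`. -/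
def maxProper (X : Finset ℕ) (T : PTree) : PTree :=
  T.filter (fun C => C ≠ X ∧ ∀ D ∈ T, C ⊂ D → D = X)

/-- Common refinement of two collections of blocks. -/
def meet2 (π π' : Finset (Finset ℕ)) : Finset (Finset ℕ) :=
  ((π ×ˢ π').image (fun p => p.1 ∩ p.2)).filter (fun B => B.Nonempty)

/-- Common refinement of a list of collections of blocks. -/
def meetAll : List (Finset (Finset ℕ)) → Finset (Finset ℕ)
  | [] => ∅
  | π :: L => L.foldl meet2 π

/-- Adams consensus, with fuel: the maximal proper clusters of the output are
the nonempty intersections of one maximal proper cluster from each input tree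
(the common refinement of the top partitions), and the construction recurses on
each such block with the restricted profile. -/
def adamsAux : ℕ → Finset ℕ → List PTree → PTree
  | 0, X, _ => {X}
  | n + 1, X, P =>
      let B := (meetAll (P.map (maxProper X))).filter (fun A => A ⊂ X)
      insert X (B.biUnion (fun A => adamsAux n A (P.map (fun T => restrictT T A))))

/-- Adams consensus of a profile of trees on leaf set `X`. -/
def adams (X : Finset ℕ) (P : List PTree) : PTree := adamsAux X.card X P

/-! Each cluster `Y ≠ X` of `φ_Ad(P)` lies in the subtree grown on one block `A` of the common
refinement of the top partitions. These blocks are pairwise disjoint, so only that subtree (together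
with `X`, whose trace on `Y` is again `Y`) meets `Y`, and restricting `φ_Ad(P)` to `Y` is the same as
restricting `φ_Ad(P|_A)`. Since `P|_A|_Y = P|_Y`, strong induction on the leaf set concludes. -/

open Finset

section Restriction

variable {H H' : PTree} {Y : Finset ℕ}

lemma mem_restrictT {D : Finset ℕ} :
    D ∈ restrictT H Y ↔ (∃ C ∈ H, C ∩ Y = D) ∧ D.Nonempty := by
  simp [restrictT]

lemma nonempty_of_mem_restrictT {D : Finset ℕ} (hD : D ∈ restrictT H Y) : D.Nonempty :=
  (mem_restrictT.1 hD).2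

lemma restrictT_mono (h : H ⊆ H') : restrictT H Y ⊆ restrictT H' Y :=
  filter_subset_filter _ (image_subset_image h)

lemma restrictT_eq_self (hsub : ∀ C ∈ H, C ⊆ Y) (hne : ∀ C ∈ H, C.Nonempty) :
    restrictT H Y = H := by
  ext D
  simp only [mem_restrictT]
  constructor
  · rintro ⟨⟨C, hC, rfl⟩, -⟩
    rwa [inter_eq_left.2 (hsub C hC)]
  · exact fun hD => ⟨⟨D, hD, inter_eq_left.2 (hsub D hD)⟩, hne D hD⟩

lemma restrictT_restrictT {A : Finset ℕ} (hYA : Y ⊆ A) :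
    restrictT (restrictT H A) Y = restrictT H Y := by
  have hA : ∀ C : Finset ℕ, C ∩ A ∩ Y = C ∩ Y := fun C => by rw [inter_assoc, inter_eq_right.2 hYA]
  ext D
  simp only [mem_restrictT]
  constructor
  · rintro ⟨⟨_, ⟨⟨C, hC, rfl⟩, -⟩, rfl⟩, hne⟩
    exact ⟨⟨C, hC, (hA C).symm⟩, hne⟩
  · rintro ⟨⟨C, hC, rfl⟩, hne⟩
    exact ⟨⟨C ∩ A, ⟨⟨C, hC, rfl⟩, hne.mono (inter_subset_inter_left hYA)⟩, hA C⟩, hne⟩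

lemma restrictT_eq_restrictT_of_subset (hsub : H' ⊆ H)
    (h : ∀ C ∈ H, (C ∩ Y).Nonempty → ∃ C' ∈ H', C' ∩ Y = C ∩ Y) :
    restrictT H Y = restrictT H' Y := by
  refine Subset.antisymm (fun D hD => ?_) (restrictT_mono hsub)
  obtain ⟨⟨C, hC, rfl⟩, hne⟩ := mem_restrictT.1 hD
  obtain ⟨C', hC', hC'Y⟩ := h C hC hne
  exact mem_restrictT.2 ⟨⟨C', hC', hC'Y⟩, hne⟩

end Restriction

lemma IsHierarchy.restrict {X A : Finset ℕ} {T : PTree} (h : IsHierarchy X T) (hA : A ⊆ X)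
    (hAne : A.Nonempty) : IsHierarchy A (restrictT T A) where
  subset_top _ hC := by
    obtain ⟨⟨C, -, rfl⟩, -⟩ := mem_restrictT.1 hC
    exact inter_subset_right
  cluster_nonempty _ hC := nonempty_of_mem_restrictT hC
  top_mem := mem_restrictT.2 ⟨⟨X, h.top_mem, inter_eq_right.2 hA⟩, hAne⟩
  singleton_mem x hx := mem_restrictT.2
    ⟨⟨{x}, h.singleton_mem x (hA hx), inter_eq_left.2 (singleton_subset_iff.2 hx)⟩,
      singleton_nonempty x⟩
  laminar _ hC _ hD := by
    obtain ⟨⟨C, hCT, rfl⟩, -⟩ := mem_restrictT.1 hC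
    obtain ⟨⟨D, hDT, rfl⟩, -⟩ := mem_restrictT.1 hD
    rcases h.laminar C hCT D hDT with h | h | h
    · left
      rw [← subset_empty, ← h]
      exact inter_subset_inter inter_subset_left inter_subset_left
    · exact Or.inr (Or.inl (inter_subset_inter h subset_rfl))
    · exact Or.inr (Or.inr (inter_subset_inter h subset_rfl))

section CommonRefinement

lemma meetAll_induction {Q : Finset (Finset ℕ) → Prop} (empty : Q ∅)
    (meet : ∀ π π', Q π → Q π' → Q (meet2 π π')) :
    ∀ {L : List (Finset (Finset ℕ))}, (∀ π ∈ L, Q π) → Q (meetAll L)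
  | [], _ => empty
  | π :: L, hL => by
    simp only [meetAll]
    induction L generalizing π with
    | nil => exact hL π List.mem_cons_self
    | cons π' L ih =>
      refine ih (meet2 π π') fun σ hσ => ?_
      rcases List.mem_cons.1 hσ with rfl | hσ
      · exact meet _ _ (hL _ List.mem_cons_self) (hL _ (by simp))
      · exact hL σ (by simp [hσ])

lemma pairwiseDisjoint_meet2 {π π' : Finset (Finset ℕ)}
    (h : (π : Set (Finset ℕ)).PairwiseDisjoint id) (h' : (π' : Set (Finset ℕ)).PairwiseDisjoint id) :
    (meet2 π π' : Set (Finset ℕ)).PairwiseDisjoint id := by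
  intro B hB B' hB' hne
  simp only [mem_coe, meet2, mem_filter, mem_image, mem_product] at hB hB'
  obtain ⟨⟨⟨p, q⟩, ⟨hp, hq⟩, rfl⟩, -⟩ := hB
  obtain ⟨⟨⟨p', q'⟩, ⟨hp', hq'⟩, rfl⟩, -⟩ := hB'
  by_cases hpp : p = p'
  · have hqq : q ≠ q' := by
      rintro rfl
      exact hne (by rw [hpp])
    exact Disjoint.mono inter_subset_right inter_subset_right (h' hq hq' hqq)
  · exact Disjoint.mono inter_subset_left inter_subset_left (h hp hp' hpp)

lemma pairwiseDisjoint_maxProper {X : Finset ℕ} {T : PTree}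
    (hT : ∀ C ∈ T, ∀ D ∈ T, Nested C D) :
    (maxProper X T : Set (Finset ℕ)).PairwiseDisjoint id := by
  intro B hB B' hB' hne
  simp only [mem_coe, maxProper, mem_filter] at hB hB'
  rcases hT B hB.1 B' hB'.1 with h | h | h
  · exact disjoint_iff_inter_eq_empty.2 h
  · exact absurd (hB.2.2 B' hB'.1 (h.lt_of_ne hne)) hB'.2.1
  · exact absurd (hB'.2.2 B hB.1 (h.lt_of_ne hne.symm)) hB.2.1

end CommonRefinement

def adamsBlocks (X : Finset ℕ) (P : List PTree) : Finset (Finset ℕ) :=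
  (meetAll (P.map (maxProper X))).filter (· ⊂ X)

section AdamsBlocks

variable {X A : Finset ℕ} {P : List PTree}

lemma ssubset_of_mem_adamsBlocks (hA : A ∈ adamsBlocks X P) : A ⊂ X :=
  (mem_filter.1 hA).2

lemma nonempty_of_mem_adamsBlocks (hP : ∀ T ∈ P, ∀ C ∈ T, C.Nonempty)
    (hA : A ∈ adamsBlocks X P) : A.Nonempty := by
  refine meetAll_induction (Q := fun π => ∀ B ∈ π, B.Nonempty) (by simp)
    (fun _ _ _ _ _ hB => (mem_filter.1 hB).2) ?_ A (mem_filter.1 hA).1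
  simp only [List.forall_mem_map]
  exact fun T hT B hB => hP T hT B (mem_filter.1 hB).1

lemma pairwiseDisjoint_adamsBlocks (hP : ∀ T ∈ P, ∀ C ∈ T, ∀ D ∈ T, Nested C D) :
    (adamsBlocks X P : Set (Finset ℕ)).PairwiseDisjoint id := by
  refine Set.PairwiseDisjoint.subset ?_ (coe_subset.2 (filter_subset _ _))
  refine meetAll_induction (Q := fun π => (π : Set (Finset ℕ)).PairwiseDisjoint id) (by simp)
    (fun _ _ => pairwiseDisjoint_meet2) ?_
  simp only [List.forall_mem_map]
  exact fun T hT => pairwiseDisjoint_maxProper (hP T hT)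

end AdamsBlocks

section Adams

variable {X Y C : Finset ℕ} {P : List PTree}

lemma adamsAux_succ (n : ℕ) (X : Finset ℕ) (P : List PTree) :
    adamsAux (n + 1) X P =
      insert X ((adamsBlocks X P).biUnion fun A => adamsAux n A (P.map (restrictT · A))) :=
  rfl

lemma adamsAux_succ_of_card_le {n : ℕ} (h : X.card ≤ n) :
    adamsAux (n + 1) X P = adamsAux n X P := by
  induction n generalizing X P with
  | zero =>
    have hblocks : adamsBlocks X P = ∅ := eq_empty_of_forall_notMem fun A hA => by
      have := card_lt_card (ssubset_of_mem_adamsBlocks hA)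
      omega
    rw [adamsAux_succ, hblocks, biUnion_empty]
    rfl
  | succ n ih =>
    rw [adamsAux_succ, adamsAux_succ]
    refine congrArg _ (biUnion_congr rfl fun A hA => ih ?_)
    have := card_lt_card (ssubset_of_mem_adamsBlocks hA)
    omega

lemma adamsAux_eq_adams {n : ℕ} (h : X.card ≤ n) : adamsAux n X P = adams X P := by
  induction n, h using Nat.le_induction with
  | base => rfl
  | succ n hn ih => rw [adamsAux_succ_of_card_le hn, ih]

lemma adams_eq (X : Finset ℕ) (P : List PTree) :
    adams X P = insert X ((adamsBlocks X P).biUnion fun A => adams A (P.map (restrictT · A))) := by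
  rw [← adamsAux_eq_adams (Nat.le_succ X.card), adamsAux_succ]
  exact congrArg _ (biUnion_congr rfl fun A hA =>
    adamsAux_eq_adams (card_lt_card (ssubset_of_mem_adamsBlocks hA)).le)

lemma self_mem_adams : X ∈ adams X P := by
  rw [adams_eq]
  exact mem_insert_self _ _

lemma subset_of_mem_adams (hC : C ∈ adams X P) : C ⊆ X := by
  induction X using Finset.strongInduction generalizing P C with
  | H X ih =>
    rw [adams_eq, mem_insert, mem_biUnion] at hC
    obtain rfl | ⟨A, hA, hC⟩ := hC
    · exact subset_rfl
    · have hAX := ssubset_of_mem_adamsBlocks hA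
      exact (ih A hAX hC).trans hAX.subset

lemma nonempty_of_mem_adams (hX : X.Nonempty) (hP : ∀ T ∈ P, ∀ C ∈ T, C.Nonempty)
    (hC : C ∈ adams X P) : C.Nonempty := by
  induction X using Finset.strongInduction generalizing P C with
  | H X ih =>
    rw [adams_eq, mem_insert, mem_biUnion] at hC
    obtain rfl | ⟨A, hA, hC⟩ := hC
    · exact hX
    · refine ih A (ssubset_of_mem_adamsBlocks hA) (nonempty_of_mem_adamsBlocks hP hA) ?_ hC
      simp only [List.forall_mem_map]
      exact fun T _ _ => nonempty_of_mem_restrictT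

lemma restrictT_adams_eq_of_subset_mem_adamsBlocks {A : Finset ℕ}
    (hP : ∀ T ∈ P, ∀ C ∈ T, ∀ D ∈ T, Nested C D) (hA : A ∈ adamsBlocks X P) (hYA : Y ⊆ A) :
    restrictT (adams X P) Y = restrictT (adams A (P.map (restrictT · A))) Y := by
  rw [adams_eq X P]
  refine restrictT_eq_restrictT_of_subset 
    ((subset_biUnion_of_mem (fun A => adams A (P.map (restrictT · A))) hA).trans
      (subset_insert _ _)) fun C hC hCY => ?_
  obtain rfl | hC := mem_insert.1 hC
  · refine ⟨A, self_mem_adams, ?_⟩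
    rw [inter_eq_right.2 hYA, inter_eq_right.2 (hYA.trans (ssubset_of_mem_adamsBlocks hA).subset)]
  · obtain ⟨A', hA', hCA'⟩ := mem_biUnion.1 hC
    obtain rfl : A' = A := by
      by_contra hne
      obtain ⟨x, hx⟩ := hCY
      exact disjoint_left.1 (pairwiseDisjoint_adamsBlocks hP hA' hA hne)
        (subset_of_mem_adams hCA' (mem_inter.1 hx).1) (hYA (mem_inter.1 hx).2)
    exact ⟨C, hCA', rfl⟩

theorem restrictT_adams_of_mem (hX : X.Nonempty) (hh : ∀ T ∈ P, IsHierarchy X T)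
    (hY : Y ∈ adams X P) : restrictT (adams X P) Y = adams Y (P.map (restrictT · Y)) := by
  induction X using Finset.strongInduction generalizing P Y with
  | H X ih =>
    rw [adams_eq, mem_insert, mem_biUnion] at hY
    obtain rfl | ⟨A, hA, hYA⟩ := hY
    · have hPY : P.map (restrictT · Y) = P := by
        rw [List.map_congr_left fun T hT =>
          restrictT_eq_self (hh T hT).subset_top (hh T hT).cluster_nonempty, List.map_id']
      rw [hPY, restrictT_eq_self (fun _ => subset_of_mem_adams)
        (fun _ => nonempty_of_mem_adams hX fun T hT => (hh T hT).cluster_nonempty)]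
    · have hAX := ssubset_of_mem_adamsBlocks hA
      have hAne := nonempty_of_mem_adamsBlocks (fun T hT => (hh T hT).cluster_nonempty) hA
      have hYsubA := subset_of_mem_adams hYA
      have hhA : ∀ T ∈ P.map (restrictT · A), IsHierarchy A T :=
        List.forall_mem_map.2 fun T hT => (hh T hT).restrict hAX.subset hAne
      calc restrictT (adams X P) Y
          = restrictT (adams A (P.map (restrictT · A))) Y :=
            restrictT_adams_eq_of_subset_mem_adamsBlocks (fun T hT => (hh T hT).laminar) hA hYsubA
        _ = adams Y ((P.map (restrictT · A)).map (restrictT · Y)) := ih A hAX hAne hhA hYA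
        _ = adams Y (P.map (restrictT · Y)) := by
            rw [List.map_map]
            exact congrArg _ (List.map_congr_left fun T _ => restrictT_restrictT hYsubA)

end Adams

/-- Adams consensus commutes with restriction to any cluster `Y` of its output;
in particular `φ_Ad(P|_Y) ⪯ φ_Ad(P)|_Y` (extension stability for clusters (I)). -/
theorem adams_extension_stable_clusters_I (X : Finset ℕ) (P : List PTree)
    (hP : P ≠ []) (hh : ∀ T ∈ P, IsHierarchy X T)
    (Y : Finset ℕ) (hY : Y ∈ adams X P) :
    restrictT (adams X P) Y = adams Y (P.map (fun T => restrictT T Y)) ∧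
      adams Y (P.map (fun T => restrictT T Y)) ⊆ restrictT (adams X P) Y := by
  obtain ⟨T, hT⟩ := List.exists_mem_of_ne_nil P hP
  have h := restrictT_adams_of_mem ((hh T hT).cluster_nonempty X (hh T hT).top_mem) hh hY
  exact ⟨h, h.ge⟩
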